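/- Let k be a positive integer. For every S(3k)-space X, ψ_{2k}(X) ≤ 2^{s_{2k}(X)}. In particular, for every S(3)-space X, the closed pseudocharacter ψ_c(X) satisfies ψ_c(X) ≤ 2^{Us(X)} where Us(X) is the Urysohn spread. -/

import Mathlib

open Cardinal Set

universe u

variable {X : Type u}

/-- `x` is S(n)-separated from `A`. -/
def SSep [TopologicalSpace X] : ℕ → X → Set X → Prop
  | 0, x, A => x ∉ closure A
  | (n+1), x, A => ∃ U : ℕ → Set X, (∀ i ≤ n, IsOpen (U i)) ∧ x ∈ U 0 ∧
      (∀ i < n, closure (U i) ⊆ U (i+1)) ∧ closure (U n) ∩ A = ∅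

/-- `X` is an S(n)-space. -/
def SSpace (n : ℕ) (X : Type u) [TopologicalSpace X] : Prop :=
  ∀ x y : X, x ≠ y → SSep n x {y}

/-- `U` is an S(2k-1)-neighborhood of `x` (for `k ≥ 1`). -/
def SOddNhd [TopologicalSpace X] (k : ℕ) (x : X) (U : Set X) : Prop :=
  ∃ V : ℕ → Set X, (∀ i < k, IsOpen (V i)) ∧ x ∈ V 0 ∧
    (∀ i, i + 1 < k → closure (V i) ⊆ V (i+1)) ∧ V (k-1) ⊆ U

/-- `U` is an S(2k)-neighborhood of `x` (for `k ≥ 1`). -/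
def SEvenNhd [TopologicalSpace X] (k : ℕ) (x : X) (U : Set X) : Prop :=
  ∃ V : ℕ → Set X, (∀ i < k, IsOpen (V i)) ∧ x ∈ V 0 ∧
    (∀ i, i + 1 < k → closure (V i) ⊆ V (i+1)) ∧ closure (V (k-1)) ⊆ U

/-- `U` is an open S(2k-1)-neighborhood of `x`. -/
def SOpenNhd [TopologicalSpace X] (k : ℕ) (x : X) (U : Set X) : Prop :=
  IsOpen U ∧ SOddNhd k x U

/-- `U` is an S(2k-1)-open set. -/
def SOpen [TopologicalSpace X] (k : ℕ) (U : Set X) : Prop :=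
  IsOpen U ∧ ∃ x, SOddNhd k x U

/-- The S(2k-1)-closure `θ_{2k-1}(A)`. -/
def thetaOdd [TopologicalSpace X] (k : ℕ) (A : Set X) : Set X :=
  {x | ∀ U : Set X, SOpenNhd k x U → (U ∩ A).Nonempty}

/-- The S(2k)-closure `θ_{2k}(A)`. -/
def thetaEven [TopologicalSpace X] (k : ℕ) (A : Set X) : Set X :=
  {x | ∀ U : Set X, SOpenNhd k x U → (closure U ∩ A).Nonempty}

/-- `D` is S(2k-1)-discrete. -/
def SOddDiscrete [TopologicalSpace X] (k : ℕ) (D : Set X) : Prop :=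
  ∀ x ∈ D, ∃ U : Set X, SOpenNhd k x U ∧ U ∩ D = {x}

/-- `D` is S(2k)-discrete. -/
def SEvenDiscrete [TopologicalSpace X] (k : ℕ) (D : Set X) : Prop :=
  ∀ x ∈ D, ∃ U : Set X, SOpenNhd k x U ∧ closure U ∩ D = {x}

/-- The S(2k-1)-spread `s_{2k-1}(X)`. -/
noncomputable def spreadOdd (k : ℕ) (X : Type u) [TopologicalSpace X] : Cardinal :=
  (⨆ D : {D : Set X // SOddDiscrete k D}, #D.1) ⊔ Cardinal.aleph0

/-- The S(2k)-spread `s_{2k}(X)`. -/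
noncomputable def spreadEven (k : ℕ) (X : Type u) [TopologicalSpace X] : Cardinal :=
  (⨆ D : {D : Set X // SEvenDiscrete k D}, #D.1) ⊔ Cardinal.aleph0

/-- The S(2k-1)-cellularity `c_{2k-1}(X)`. -/
noncomputable def cellOdd (k : ℕ) (X : Type u) [TopologicalSpace X] : Cardinal :=
  (⨆ F : {F : Set (Set X) // (∀ U ∈ F, SOpen k U ∧ U.Nonempty) ∧
      (∀ U ∈ F, ∀ V ∈ F, U ≠ V → U ∩ V = ∅)}, #F.1) ⊔ Cardinal.aleph0

/-- The S(2k)-cellularity `c_{2k}(X)`. -/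
noncomputable def cellEven (k : ℕ) (X : Type u) [TopologicalSpace X] : Cardinal :=
  (⨆ F : {F : Set (Set X) // (∀ U ∈ F, SOpen k U ∧ U.Nonempty) ∧
      (∀ U ∈ F, ∀ V ∈ F, U ≠ V → closure U ∩ closure V = ∅)}, #F.1) ⊔ Cardinal.aleph0

/-- The S(2k-1)-character `χ_{2k-1}(X)`. -/
noncomputable def charOdd (k : ℕ) (X : Type u) [TopologicalSpace X] : Cardinal :=
  sInf {c | Cardinal.aleph0 ≤ c ∧ ∀ x : X, ∃ B : Set (Set X), #B ≤ c ∧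
    (∀ U ∈ B, SOpenNhd k x U) ∧
    ∀ U : Set X, SOpenNhd k x U → ∃ V ∈ B, V ⊆ U}

/-- The S(2k)-character `χ_{2k}(X)`. -/
noncomputable def charEven (k : ℕ) (X : Type u) [TopologicalSpace X] : Cardinal :=
  sInf {c | Cardinal.aleph0 ≤ c ∧ ∀ x : X, ∃ B : Set (Set X), #B ≤ c ∧
    (∀ V ∈ B, IsClosed V ∧ SOddNhd k x V) ∧
    ∀ W : Set X, SOpenNhd k x W → ∃ V ∈ B, V ⊆ closure W}

/-- The S(2k-1)-pseudocharacter `ψ_{2k-1}(X)`. -/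
noncomputable def psiOdd (k : ℕ) (X : Type u) [TopologicalSpace X] : Cardinal :=
  sInf {c | Cardinal.aleph0 ≤ c ∧ ∀ x : X, ∃ B : Set (Set X), #B ≤ c ∧
    (∀ U ∈ B, SOpenNhd k x U) ∧ ⋂₀ B = {x}}

/-- The S(2k)-pseudocharacter `ψ_{2k}(X)`. -/
noncomputable def psiEven (k : ℕ) (X : Type u) [TopologicalSpace X] : Cardinal :=
  sInf {c | Cardinal.aleph0 ≤ c ∧ ∀ x : X, ∃ B : Set (Set X), #B ≤ c ∧
    (∀ U ∈ B, SOpenNhd k x U) ∧ (⋂ U ∈ B, closure U) = {x}}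

/-- The usual pseudocharacter `ψ(X)`. -/
noncomputable def psi (X : Type u) [TopologicalSpace X] : Cardinal :=
  sInf {c | Cardinal.aleph0 ≤ c ∧ ∀ x : X, ∃ B : Set (Set X), #B ≤ c ∧
    (∀ U ∈ B, IsOpen U) ∧ ⋂₀ B = {x}}


/-!
Let `κ = s_{2k}(X)` and suppose that at some point `x` no `2 ^ κ` open S(2k-1)-neighbourhoods
have closures meeting in `{x}`. By transfinite recursion of length `(2 ^ κ)⁺` pick points
`z_α ≠ x` with S(3k)-chains `U_α` around `z_α` avoiding `x`, such that `z_α` lies in the closure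
of the S(2k-1)-neighbourhood `(cl U_β(2k))ᶜ` of `x` for all `β < α`, so `z_α ∉ U_β(2k)`.
Colour `β < α` by whether `z_β ∈ U_α(k)`; Erdős–Rado gives a homogeneous subsequence of type
`κ⁺`, and in either colour it produces an S(2k)-discrete set of size `κ⁺`, a contradiction.
Chains are indexed from `0` and `k = q + 1`, so levels `q`, `q + 1`, `2 * q + 2` are the levels
`k - 1`, `k`, `2k` above.
-/

open Order

theorem WellFoundedLT.exists_forall_rec {ι β : Type*} [LT ι] [WellFoundedLT ι]
    (p : ∀ α : ι, (∀ γ, γ < α → β) → β → Prop) (h : ∀ α g, ∃ y, p α g y) :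
    ∃ f : ι → β, ∀ α, p α (fun γ _ => f γ) (f α) := by
  refine ⟨wellFounded_lt.fix fun α g => (h α g).choose, fun α => ?_⟩
  rw [wellFounded_lt.fix_eq]
  exact (h α _).choose_spec

theorem Cardinal.exists_forall_lt_of_mk_le {κ : Cardinal.{u}} (hκ : ℵ₀ ≤ κ)
    {s : Set (succ κ).ord.ToType} (hs : #s ≤ κ) : ∃ η, ∀ ζ ∈ s, ζ < η :=
  not_isCofinal_iff.1 fun h => (cof_le h).not_gt <| by
    rw [Ordinal.cof_toType, (isRegular_succ hκ).cof_ord]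
    exact hs.trans_lt (lt_succ κ)

theorem Cardinal.mk_Iio_le {c : Cardinal.{u}} (i : (succ c).ord.ToType) : #(Set.Iio i) ≤ c :=
  lt_succ_iff.1 <| by simpa using mk_Iio_lt i (by simp)

theorem Cardinal.exists_strictMono_mem_of_le_mk {ι : Type u} [LinearOrder ι] [WellFoundedLT ι]
    {H : Set ι} {c : Cardinal.{u}} (h : c ≤ #H) :
    ∃ g : c.ord.ToType → ι, StrictMono g ∧ ∀ j, g j ∈ H := by
  obtain ⟨e⟩ : Nonempty (((· < ·) : c.ord.ToType → c.ord.ToType → Prop) ↪r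
      ((· < ·) : H → H → Prop)) := by
    rw [← Ordinal.type_le_iff', Ordinal.type_toType, ord_le, Ordinal.card_type]
    exact h
  exact ⟨fun j => e j, fun i j hij => e.map_rel_iff.2 hij, fun j => (e j).2⟩

theorem Cardinal.mk_bounded_subset_le_two_pow {α : Type u} {κ : Cardinal.{u}} (hκ : ℵ₀ ≤ κ)
    {S : Set α} (hS : #S ≤ 2 ^ κ) : #{A : Set α // A ⊆ S ∧ #A ≤ κ} ≤ 2 ^ κ :=
  calc #{A : Set α // A ⊆ S ∧ #A ≤ κ} ≤ max #S ℵ₀ ^ κ := mk_bounded_subset_le S κ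
    _ ≤ (2 ^ κ) ^ κ := power_le_power_right (max_le hS (hκ.trans (cantor κ).le))
    _ = 2 ^ κ := by rw [← power_mul, mul_eq_self hκ]

theorem Cardinal.mk_iUnion_le_two_pow {α ι : Type u} {κ : Cardinal.{u}} (hκ : ℵ₀ ≤ κ)
    {s : ι → Set α} (hι : #ι ≤ 2 ^ κ) (hs : ∀ i, #(s i) ≤ 2 ^ κ) : #(⋃ i, s i) ≤ 2 ^ κ := by
  have h2κ : ℵ₀ ≤ 2 ^ κ := hκ.trans (cantor κ).le
  refine (mk_iUnion_le s).trans ?_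
  calc #ι * ⨆ i, #(s i) ≤ 2 ^ κ * 2 ^ κ := mul_le_mul' hι (ciSup_le' hs)
    _ = 2 ^ κ := mul_eq_self h2κ

namespace SimpleGraph

variable {V : Type u} (G : SimpleGraph V) (κ : Cardinal.{u})

def RealizesSmallTypes (M : Set V) : Prop :=
  ∀ A ⊆ M, #A ≤ κ → ∀ b ∉ A,
    ∃ m ∈ M, m ∉ A ∧ A ∩ G.neighborSet m = A ∩ G.neighborSet b

noncomputable def realizer [Nonempty V] (A T : Set V) : V :=
  Classical.epsilon fun m => m ∉ A ∧ A ∩ G.neighborSet m = T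

noncomputable def realizerStep [Nonempty V] (S : Set V) : Set V :=
  S ∪ Set.range fun p : {A // A ⊆ S ∧ #A ≤ κ} × {A // A ⊆ S ∧ #A ≤ κ} => G.realizer p.1.1 p.2.1

/-- `κ⁺` stages, so that by regularity of `κ⁺` every subset of size `≤ κ` of the union already
lies below some stage. -/
noncomputable def realizerTower [Nonempty V] : (succ κ).ord.ToType → Set V :=
  wellFounded_lt.fix fun η t => G.realizerStep κ (⋃ ζ : Set.Iio η, t ζ ζ.2)

variable {G κ}

lemma realizerTower_eq [Nonempty V] (η : (succ κ).ord.ToType) :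
    G.realizerTower κ η = G.realizerStep κ (⋃ ζ : Set.Iio η, G.realizerTower κ ζ) :=
  wellFounded_lt.fix_eq _ η

lemma mk_realizerStep_le [Nonempty V] (hκ : ℵ₀ ≤ κ) {S : Set V} (hS : #S ≤ 2 ^ κ) :
    #(G.realizerStep κ S) ≤ 2 ^ κ := by
  have h2κ : ℵ₀ ≤ 2 ^ κ := hκ.trans (cantor κ).le
  have hsub := mk_bounded_subset_le_two_pow hκ hS
  calc #(G.realizerStep κ S) ≤ 2 ^ κ + 2 ^ κ * 2 ^ κ := by
        refine (mk_union_le _ _).trans (add_le_add hS (mk_range_le.trans ?_))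
        simp only [mk_prod, lift_id]
        exact mul_le_mul' hsub hsub
    _ = 2 ^ κ := by rw [mul_eq_self h2κ, add_eq_self h2κ]

lemma mk_realizerTower_le [Nonempty V] (hκ : ℵ₀ ≤ κ) (η : (succ κ).ord.ToType) :
    #(G.realizerTower κ η) ≤ 2 ^ κ := by
  induction η using WellFoundedLT.induction with
  | _ η ih =>
    rw [realizerTower_eq]
    refine mk_realizerStep_le hκ (mk_iUnion_le_two_pow hκ ?_ fun ζ => ih ζ ζ.2)
    exact (mk_Iio_le η).trans (cantor κ).le

theorem exists_realizesSmallTypes [Nonempty V] (hκ : ℵ₀ ≤ κ) :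
    ∃ M : Set V, #M ≤ 2 ^ κ ∧ G.RealizesSmallTypes κ M := by
  refine ⟨⋃ η, G.realizerTower κ η, mk_iUnion_le_two_pow hκ ?_ (mk_realizerTower_le hκ),
    fun A hAM hAκ b hbA => ?_⟩
  · rw [mk_ord_toType]
    exact succ_le_of_lt (cantor κ)
  obtain ⟨η, hη⟩ : ∃ η : (succ κ).ord.ToType, A ⊆ ⋃ ζ : Set.Iio η, G.realizerTower κ ζ := by
    choose level hlevel using fun a : A => Set.mem_iUnion.1 (hAM a.2)
    obtain ⟨η, hη⟩ := exists_forall_lt_of_mk_le hκ (mk_range_le.trans hAκ)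
    exact ⟨η, fun a ha => Set.mem_iUnion.2 ⟨⟨_, hη _ ⟨⟨a, ha⟩, rfl⟩⟩, hlevel ⟨a, ha⟩⟩⟩
  have hT : A ∩ G.neighborSet b ⊆ A := Set.inter_subset_left
  have hmem : G.realizer A (A ∩ G.neighborSet b) ∈ G.realizerTower κ η := by
    rw [realizerTower_eq]
    exact Or.inr ⟨(⟨A, hη, hAκ⟩, ⟨_, hT.trans hη, (mk_le_mk_of_subset hT).trans hAκ⟩), rfl⟩
  exact ⟨_, Set.mem_iUnion.2 ⟨η, hmem⟩,
    Classical.epsilon_spec (p := fun m => m ∉ A ∧ A ∩ G.neighborSet m = A ∩ G.neighborSet b)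
      ⟨b, hbA, rfl⟩⟩

theorem exists_injective_adj_iff_adj {M : Set V} (hM : G.RealizesSmallTypes κ M) {b : V}
    (hb : b ∉ M) :
    ∃ a : (succ κ).ord.ToType → V, Function.Injective a ∧
      ∀ ζ η, ζ < η → (G.Adj (a ζ) (a η) ↔ G.Adj (a ζ) b) := by
  obtain ⟨a, ha⟩ := WellFoundedLT.exists_forall_rec
    (p := fun (η : (succ κ).ord.ToType) (g : ∀ ζ, ζ < η → M) (y : M) =>
      ∀ ζ (hζ : ζ < η), (g ζ hζ : V) ≠ y ∧ (G.Adj (g ζ hζ) y ↔ G.Adj (g ζ hζ) b))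
    fun η g => by
      set A := Set.range fun ζ : Set.Iio η => (g ζ.1 ζ.2 : V)
      obtain ⟨m, hmM, hmA, hm⟩ := hM A (Set.range_subset_iff.2 fun ζ => (g ζ.1 ζ.2).2)
        (mk_range_le.trans (mk_Iio_le η)) b fun hbA => hb (by
          obtain ⟨ζ, rfl⟩ := hbA
          exact (g ζ.1 ζ.2).2)
      refine ⟨⟨m, hmM⟩, fun ζ hζ => ⟨fun h => hmA ⟨⟨ζ, hζ⟩, h⟩, ?_⟩⟩
      have hζA : (g ζ hζ : V) ∈ A := ⟨⟨ζ, hζ⟩, rfl⟩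
      have := congrArg ((g ζ hζ : V) ∈ ·) hm
      simpa [hζA, adj_comm] using this
  refine ⟨fun η => a η, fun ζ η h => ?_, fun ζ η h => (ha η ζ h).2⟩
  by_contra hne
  rcases lt_or_gt_of_ne hne with hlt | hlt
  · exact (ha η ζ hlt).1 h
  · exact (ha ζ η hlt).1 h.symm

/-- Erdős–Rado: `(2 ^ κ)⁺ → (κ⁺)²₂`. Over a set `M` of size `2 ^ κ` realizing all types over
its small subsets, a point `b ∉ M` yields a `κ⁺`-sequence in which every element realizes the
type of `b` over its predecessors; the colour of a pair then depends only on its smaller element. -/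
theorem exists_isClique_or_isIndepSet_of_two_pow_lt_mk (hκ : ℵ₀ ≤ κ) (hV : 2 ^ κ < #V) :
    ∃ H : Set V, succ κ ≤ #H ∧ (G.IsClique H ∨ G.IsIndepSet H) := by
  have : Nonempty V := mk_ne_zero_iff.1 (hV.trans_le' zero_le).ne'
  obtain ⟨M, hMκ, hM⟩ := G.exists_realizesSmallTypes hκ
  obtain ⟨b, hb⟩ : ∃ b, b ∉ M := by
    by_contra! h
    rw [Set.eq_univ_of_forall h, mk_univ] at hMκ
    exact hMκ.not_gt hV
  obtain ⟨a, ha, hadj⟩ := exists_injective_adj_iff_adj hM hb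
  have hfibre : ∀ ζ η, ζ ≠ η → (G.Adj (a ζ) b ↔ G.Adj (a η) b) →
      (G.Adj (a ζ) (a η) ↔ G.Adj (a ζ) b) := by
    intro ζ η hne hcol
    rcases lt_or_gt_of_ne hne with hlt | hlt
    · exact hadj ζ η hlt
    · rw [adj_comm, hadj η ζ hlt, hcol]
  set P := {η | G.Adj (a η) b}
  have hsplit : succ κ ≤ #P ∨ succ κ ≤ #(Pᶜ : Set _) := by
    by_contra! h
    have := (mk_union_le P Pᶜ).trans (add_le_add (lt_succ_iff.1 h.1) (lt_succ_iff.1 h.2))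
    rw [Set.union_compl_self, mk_univ, mk_ord_toType, add_eq_self hκ] at this
    exact (lt_succ κ).not_ge this
  rcases hsplit with hP | hP
  · refine ⟨a '' P, by rwa [mk_image_eq ha], Or.inl ?_⟩
    rintro _ ⟨ζ, hζ, rfl⟩ _ ⟨η, hη, rfl⟩ hne
    exact (hfibre ζ η (ne_of_apply_ne a hne) (iff_of_true hζ hη)).2 hζ
  · refine ⟨a '' Pᶜ, by rwa [mk_image_eq ha], Or.inr ?_⟩
    rintro _ ⟨ζ, hζ, rfl⟩ _ ⟨η, hη, rfl⟩ hne
    exact fun h => hζ ((hfibre ζ η (ne_of_apply_ne a hne) (iff_of_false hζ hη)).1 h)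

end SimpleGraph

section SSpace

variable [TopologicalSpace X]

lemma IsOpen.closure_compl_closure_subset {s : Set X} (hs : IsOpen s) :
    closure (closure s)ᶜ ⊆ sᶜ := by
  rw [closure_compl]
  exact Set.compl_subset_compl.2 hs.subset_interior_closure

structure IsOpenChain (m : ℕ) (a : X) (U : ℕ → Set X) : Prop where
  isOpen : ∀ i ≤ m, IsOpen (U i)
  mem_zero : a ∈ U 0
  closure_subset_succ : ∀ i < m, closure (U i) ⊆ U (i + 1)

namespace IsOpenChain

variable {m : ℕ} {a b : X} {U V : ℕ → Set X}

lemma of_le (h : IsOpenChain m a U) {n : ℕ} (hn : n ≤ m) : IsOpenChain n a U :=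
  ⟨fun i hi => h.isOpen i (hi.trans hn), h.mem_zero,
    fun i hi => h.closure_subset_succ i (hi.trans_le hn)⟩

lemma subset (h : IsOpenChain m a U) {i j : ℕ} (hij : i ≤ j) (hj : j ≤ m) : U i ⊆ U j := by
  induction j, hij using Nat.le_induction with
  | base => rfl
  | succ j hij ih =>
    exact (ih (by omega)).trans (subset_closure.trans (h.closure_subset_succ j (by omega)))

lemma closure_subset (h : IsOpenChain m a U) {i j : ℕ} (hij : i < j) (hj : j ≤ m) :
    closure (U i) ⊆ U j :=
  (h.closure_subset_succ i (by omega)).trans (h.subset hij hj)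

lemma mem (h : IsOpenChain m a U) {j : ℕ} (hj : j ≤ m) : a ∈ U j :=
  h.subset (Nat.zero_le j) hj h.mem_zero

lemma inter (hU : IsOpenChain m a U) (hV : IsOpenChain m a V) :
    IsOpenChain m a fun i => U i ∩ V i :=
  ⟨fun i hi => (hU.isOpen i hi).inter (hV.isOpen i hi), ⟨hU.mem_zero, hV.mem_zero⟩,
    fun i hi => (closure_inter_subset_inter_closure _ _).trans
      (Set.inter_subset_inter (hU.closure_subset_succ i hi) (hV.closure_subset_succ i hi))⟩

lemma compl_closure_rev (h : IsOpenChain m a U) (hb : b ∉ closure (U m)) :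
    IsOpenChain m b fun i => (closure (U (m - i)))ᶜ := by
  refine ⟨fun i _ => isClosed_closure.isOpen_compl, by simpa using hb, fun i hi => ?_⟩
  calc closure (closure (U (m - i)))ᶜ ⊆ (U (m - i))ᶜ :=
        (h.isOpen _ (Nat.sub_le m i)).closure_compl_closure_subset
    _ ⊆ (closure (U (m - (i + 1))))ᶜ :=
        Set.compl_subset_compl.2 (h.closure_subset (by omega) (Nat.sub_le m i))

lemma sOpenNhd {q : ℕ} (h : IsOpenChain q a U) {W : Set X} (hW : IsOpen W) (hUW : U q ⊆ W) :
    SOpenNhd (q + 1) a W :=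
  ⟨hW, U, fun i hi => h.isOpen i (by omega), h.mem_zero,
    fun i hi => h.closure_subset_succ i (by omega), hUW⟩

end IsOpenChain

lemma SSep.exists_isOpenChain {m : ℕ} {a b : X} (h : SSep (m + 1) a {b}) :
    ∃ U, IsOpenChain m a U ∧ b ∉ closure (U m) := by
  obtain ⟨U, hopen, hmem, hnest, hsep⟩ := h
  exact ⟨U, ⟨hopen, hmem, hnest⟩, fun hb => (Set.eq_empty_iff_forall_notMem.1 hsep) b ⟨hb, rfl⟩⟩

lemma SOddNhd.mem {k : ℕ} {x : X} {U : Set X} (h : SOddNhd k x U) : x ∈ U := by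
  obtain ⟨V, -, hmem, hnest, htop⟩ := h
  suffices ∀ j, j + 1 ≤ k → x ∈ V j by
    rcases k with _ | k
    · exact htop hmem
    · exact htop (this k le_rfl)
  intro j hj
  induction j with
  | zero => exact hmem
  | succ j ih => exact hnest j hj (subset_closure (ih (by omega)))

lemma mk_le_spreadEven {k : ℕ} {J : Type u} {p : J → X} {W : J → Set X}
    (hW : ∀ j, SOpenNhd k (p j) (W j)) (hsep : ∀ i j, i ≠ j → p i ∉ closure (W j)) :
    #J ≤ spreadEven k X := by
  have hmem : ∀ j, p j ∈ closure (W j) := fun j => subset_closure (hW j).2.mem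
  have hinj : Function.Injective p := fun i j hij => by
    by_contra hne
    exact hsep i j hne (hij ▸ hmem j)
  have hdisc : SEvenDiscrete k (Set.range p) := by
    rintro _ ⟨j, rfl⟩
    refine ⟨W j, hW j, Set.eq_singleton_iff_unique_mem.2 ⟨⟨hmem j, j, rfl⟩, ?_⟩⟩
    rintro _ ⟨hi, i, rfl⟩
    by_contra hne
    exact hsep i j (ne_of_apply_ne p hne) hi
  rw [← mk_range_eq p hinj]
  exact (le_ciSup bddAbove_of_small (⟨_, hdisc⟩ : {D : Set X // SEvenDiscrete k D})).trans
    le_sup_left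

section Homogeneous

variable {q : ℕ} {J : Type u} [LinearOrder J] {z : J → X} {U : J → ℕ → Set X}

lemma mk_le_spreadEven_of_forall_lt_notMem (hU : ∀ j, IsOpenChain (2 * q + 2) (z j) (U j))
    (hout : ∀ i j, i < j → z j ∉ U i (2 * q + 2)) (hin : ∀ i j, i < j → z i ∉ U j (q + 1)) :
    #J ≤ spreadEven (q + 1) X := by
  refine mk_le_spreadEven (W := fun j => U j q)
    (fun j => ((hU j).of_le (by omega)).sOpenNhd ((hU j).isOpen q (by omega)) subset_rfl)
    fun i j hne hi => ?_
  have hi' : z i ∈ U j (q + 1) := (hU j).closure_subset (by omega) (by omega) hi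
  rcases lt_or_gt_of_ne hne with h | h
  · exact hin i j h hi'
  · exact hout j i h ((hU j).subset (by omega) le_rfl hi')

/-- The point `z (succ j)` is cut off from the later points by its own chain and from the earlier
ones by the chain of `z j`. -/
lemma mk_le_spreadEven_of_forall_lt_mem [SuccOrder J] [NoMaxOrder J]
    (hU : ∀ j, IsOpenChain (2 * q + 2) (z j) (U j))
    (hout : ∀ i j, i < j → z j ∉ U i (2 * q + 2)) (hin : ∀ i j, i < j → z i ∈ U j (q + 1)) :
    #J ≤ spreadEven (q + 1) X := by
  refine mk_le_spreadEven (p := fun j => z (succ j))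
    (W := fun j => U (succ j) (2 * q + 1) ∩ (closure (U j (q + 1)))ᶜ) (fun j => ?_)
    fun i j hne hi => ?_
  · have hfar : z (succ j) ∉ closure (U j (2 * q + 1)) := fun h =>
      hout j (succ j) (lt_succ j) ((hU j).closure_subset (by omega) le_rfl h)
    have hchain := (((hU (succ j)).of_le (by omega)).inter
      ((((hU j).of_le (by omega)).compl_closure_rev hfar).of_le (n := q) (by omega)))
    refine hchain.sOpenNhd (((hU _).isOpen _ (by omega)).inter isClosed_closure.isOpen_compl) ?_
    rw [show 2 * q + 1 - q = q + 1 by omega]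
    exact Set.inter_subset_inter_left _ ((hU _).subset (by omega) (by omega))
  · obtain ⟨hi₁, hi₂⟩ := closure_inter_subset_inter_closure _ _ hi
    rcases lt_or_gt_of_ne hne with h | h
    · refine ((hU j).isOpen _ (by omega)).closure_compl_closure_subset hi₂ ?_
      rcases (succ_le_of_lt h).lt_or_eq with h' | h'
      · exact hin _ _ h'
      · exact h' ▸ (hU j).mem (by omega)
    · exact hout _ _ (succ_lt_succ h)
        ((hU _).closure_subset (by omega) le_rfl hi₁)

end Homogeneous

lemma exists_chains_of_forall_iInter_closure_ne {q : ℕ} (hS : SSpace (3 * (q + 1)) X) {x : X}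
    {κ : Cardinal.{u}} (hx : ∀ B : Set (Set X), #B ≤ κ → (∀ U ∈ B, SOpenNhd (q + 1) x U) →
      (⋂ U ∈ B, closure U) ≠ {x}) :
    ∃ (z : (succ κ).ord.ToType → X) (U : (succ κ).ord.ToType → ℕ → Set X),
      (∀ α, IsOpenChain (2 * q + 2) (z α) (U α)) ∧ ∀ β α, β < α → z α ∉ U β (2 * q + 2) := by
  choose U hU hUx using fun y : {y // y ≠ x} =>
    SSep.exists_isOpenChain (m := 3 * q + 2) (hS y x y.2)
  have hnhd : ∀ y, SOpenNhd (q + 1) x (closure (U y (2 * q + 2)))ᶜ := fun y => by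
    refine (((hU y).compl_closure_rev (hUx y)).of_le (n := q) (by omega)).sOpenNhd
      isClosed_closure.isOpen_compl ?_
    rw [show 3 * q + 2 - q = 2 * q + 2 by omega]
  obtain ⟨z, hz⟩ := WellFoundedLT.exists_forall_rec
    (p := fun (α : (succ κ).ord.ToType) (g : ∀ β, β < α → {y // y ≠ x}) (y : {y // y ≠ x}) =>
      ∀ β (h : β < α), (y : X) ∉ U (g β h) (2 * q + 2))
    fun α g => by
      set B := Set.range fun β : Set.Iio α => (closure (U (g β.1 β.2) (2 * q + 2)))ᶜ
      have hB : ∀ W ∈ B, SOpenNhd (q + 1) x W := by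
        rintro _ ⟨β, rfl⟩
        exact hnhd _
      obtain ⟨y, hyB, hyx⟩ : ∃ y ∈ ⋂ W ∈ B, closure W, y ≠ x := by
        by_contra! h
        exact hx B (mk_range_le.trans (mk_Iio_le α)) hB <| Set.eq_singleton_iff_unique_mem.2
          ⟨Set.mem_iInter₂.2 fun W hW => subset_closure (hB W hW).2.mem, h⟩
      exact ⟨⟨y, hyx⟩, fun β h => ((hU _).isOpen _ (by omega)).closure_compl_closure_subset
        (Set.mem_iInter₂.1 hyB _ ⟨⟨β, h⟩, rfl⟩)⟩
  exact ⟨fun α => z α, fun α => U (z α), fun α => (hU _).of_le (by omega),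
    fun β α h => hz α β h⟩

theorem psiEven_le_two_pow_spreadEven (q : ℕ) (hS : SSpace (3 * (q + 1)) X) :
    psiEven (q + 1) X ≤ 2 ^ spreadEven (q + 1) X := by
  set κ := spreadEven (q + 1) X
  have hκ : ℵ₀ ≤ κ := le_sup_right
  refine csInf_le' ⟨hκ.trans (cantor κ).le, fun x => ?_⟩
  by_contra! hx
  obtain ⟨z, U, hU, hout⟩ := exists_chains_of_forall_iInter_closure_ne hS hx
  let G := SimpleGraph.fromRel fun α β => α < β ∧ z α ∈ U β (q + 1)
  obtain ⟨H, hH, hhom⟩ := G.exists_isClique_or_isIndepSet_of_two_pow_lt_mk hκ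
    (by rw [mk_ord_toType]; exact lt_succ _)
  obtain ⟨g, hg, hgH⟩ := exists_strictMono_mem_of_le_mk hH
  have hadj : ∀ i j, i < j → (G.Adj (g i) (g j) ↔ z (g i) ∈ U (g j) (q + 1)) := fun i j h => by
    simp [G, hg h, (hg h).ne, (hg h).not_gt]
  have : NoMaxOrder (succ κ).ord.ToType := noMaxOrder (hκ.trans (le_succ κ))
  suffices succ κ ≤ κ from (lt_succ κ).not_ge this
  rw [← mk_ord_toType (succ κ)]
  rcases hhom with hclique | hindep
  · exact mk_le_spreadEven_of_forall_lt_mem (fun j => hU (g j)) (fun i j h => hout _ _ (hg h))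
      fun i j h => (hadj i j h).1 (hclique (hgH i) (hgH j) (hg h).ne)
  · exact mk_le_spreadEven_of_forall_lt_notMem (fun j => hU (g j))
      (fun i j h => hout _ _ (hg h))
      fun i j h hin => hindep (hgH i) (hgH j) (hg h).ne ((hadj i j h).2 hin)

end SSpace

theorem stmt16 (k : ℕ) (hk : 1 ≤ k) (X : Type u) [TopologicalSpace X] :
    (SSpace (3 * k) X → psiEven k X ≤ 2 ^ spreadEven k X) ∧
    (SSpace 3 X → psiEven 1 X ≤ 2 ^ spreadEven 1 X) := by
  obtain ⟨q, rfl⟩ : ∃ q, k = q + 1 := ⟨k - 1, by omega⟩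
  exact ⟨psiEven_le_two_pow_spreadEven q, psiEven_le_two_pow_spreadEven 0⟩
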